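/- Let k be a field of odd characteristic with a non-square g ∈ k×, and let K = k(√g) be obtained by adjoining a square root of g. Then the two 2-dimensional subspaces of K⁶, U₁ = span{(0,0,0,0,0,1),(1,0,0,0,0,0)} and U₄ = span{(0,0,1,1,0,0),(0,1,0,0,g,0)}, lie in the same orbit under the right action of ψ(GL₄(K)), where ψ is the exterior square representation in the lexicographic basis x₁₂,…,x₃₄. -/

import Mathlib

/-!
Over `K` the Plücker form `x₁₂x₃₄ − x₁₃x₂₄ + x₁₄x₂₃` restricts on `U₄` to `a² − g b²`, which
splits as `(a − s b)(a + s b)`. Accordingly, with `v = (0,0,1,1,0,0)` and `w = (0,1,0,0,g,0)`,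
the bivectors `s v ∓ w` spanning `U₄` are decomposable: they are `u₃ ∧ u₄` and `u₁ ∧ u₂` for
the rows `u₁, …, u₄` of `A = sqrtMergingMatrix s`, which has determinant `4g ≠ 0`. Since the row
vector `e_{rs}` is sent by `ψ(A)` to `u_r ∧ u_s`, the matrix `A` carries
`U₁ = span{e₃₄, e₁₂}` onto `U₄`.
-/

open Matrix

def lexPair : Fin 6 → Fin 4 × Fin 4 := ![(0,1),(0,2),(0,3),(1,2),(1,3),(2,3)]

/-- The exterior square representation `ψ : GL₄ → GL₆` in matrix form. -/
def extSq {k : Type*} [CommRing k] (A : Matrix (Fin 4) (Fin 4) k) :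
    Matrix (Fin 6) (Fin 6) k :=
  Matrix.of fun rs ij =>
    A (lexPair rs).1 (lexPair ij).1 * A (lexPair rs).2 (lexPair ij).2 -
      A (lexPair rs).2 (lexPair ij).1 * A (lexPair rs).1 (lexPair ij).2

theorem Submodule.span_pair_sub_add {R M : Type*} [DivisionRing R] [AddCommGroup M] [Module R M]
    (h2 : (2 : R) ≠ 0) (x y : M) : span R {x - y, x + y} = span R {x, y} := by
  have hx : (x - y) + (x + y) = (2 : R) • x := by rw [two_smul]; abel
  have hy : (x + y) - (x - y) = (2 : R) • y := by rw [two_smul]; abel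
  refine le_antisymm (span_le.mpr ?_) (span_le.mpr ?_)
  · rintro z (rfl | rfl)
    · exact sub_mem (subset_span (by simp)) (subset_span (by simp))
    · exact add_mem (subset_span (by simp)) (subset_span (by simp))
  · rintro z (rfl | rfl)
    · rw [SetLike.mem_coe, ← smul_mem_iff _ h2, ← hx]
      exact add_mem (subset_span (by simp)) (subset_span (by simp))
    · rw [SetLike.mem_coe, ← smul_mem_iff _ h2, ← hy]
      exact sub_mem (subset_span (by simp)) (subset_span (by simp))

theorem Submodule.span_pair_smul_left {R M : Type*} [Semiring R] [AddCommMonoid M] [Module R M]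
    {a : R} (ha : IsUnit a) (x y : M) : span R {a • x, y} = span R {x, y} := by
  rw [span_insert, span_insert, span_singleton_smul_eq ha]

theorem Submodule.span_pair_smul_sub_smul_add {R M : Type*} [DivisionRing R] [AddCommGroup M]
    [Module R M] (h2 : (2 : R) ≠ 0) {a : R} (ha : a ≠ 0) (x y : M) :
    span R {a • x - y, a • x + y} = span R {x, y} := by
  rw [span_pair_sub_add h2, span_pair_smul_left ha.isUnit]

def sqrtMergingMatrix {R : Type*} [Ring R] (s : R) : Matrix (Fin 4) (Fin 4) R :=
  !![1, s, 0, 0; 0, 0, 1, s; 1, -s, 0, 0; 0, 0, -1, s]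

theorem det_sqrtMergingMatrix {R : Type*} [CommRing R] (s : R) :
    (sqrtMergingMatrix s).det = 4 * s ^ 2 := by
  simp [sqrtMergingMatrix, det_succ_row_zero, Fin.sum_univ_succ, Fin.succAbove]
  ring

section vecMul_extSq

variable {R : Type*} [CommRing R] (s : R)

theorem vecMul_extSq_sqrtMergingMatrix_e₃₄ :
    ![0, 0, 0, 0, 0, 1] ᵥ* extSq (sqrtMergingMatrix s) =
      s • ![0, 0, 1, 1, 0, 0] - ![0, 1, 0, 0, s ^ 2, 0] := by
  ext i
  fin_cases i <;> simp [vecMul, dotProduct, Fin.sum_univ_six, extSq, lexPair, sqrtMergingMatrix]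
  ring

theorem vecMul_extSq_sqrtMergingMatrix_e₁₂ :
    ![1, 0, 0, 0, 0, 0] ᵥ* extSq (sqrtMergingMatrix s) =
      s • ![0, 0, 1, 1, 0, 0] + ![0, 1, 0, 0, s ^ 2, 0] := by
  ext i
  fin_cases i <;> simp [vecMul, dotProduct, Fin.sum_univ_six, extSq, lexPair, sqrtMergingMatrix]
  ring

end vecMul_extSq

theorem orbits_one_and_four_merge_over_sqrt_extension
    {k K : Type*} [Field k] [Field K] [Algebra k K]
    (hodd : Odd (ringChar k))
    (g : k) (hg : g ≠ 0)
    (s : K) (hs : s ^ 2 = algebraMap k K g) :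
    ∃ A : Matrix (Fin 4) (Fin 4) K, IsUnit A.det ∧
      (Submodule.span K {![0,0,0,0,0,1], ![1,0,0,0,0,0]}).map
          (extSq A).vecMulLinear =
        Submodule.span K {![0,0,1,1,0,0], ![0,1,0,0,algebraMap k K g,0]} := by
  have h2 : (2 : K) ≠ 0 := by
    refine Ring.two_ne_zero fun h => ?_
    rw [← Algebra.ringChar_eq k K] at h
    exact Nat.not_odd_iff_even.mpr even_two (h ▸ hodd)
  have hs0 : s ≠ 0 := by
    rintro rfl
    exact hg (FaithfulSMul.algebraMap_injective k K (by simp [← hs]))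
  refine ⟨sqrtMergingMatrix s, ?_, ?_⟩
  · rw [det_sqrtMergingMatrix]
    have h4 : (4 : K) ≠ 0 := by
      rw [show (4 : K) = 2 * 2 by norm_num]
      exact mul_ne_zero h2 h2
    exact (mul_ne_zero h4 (pow_ne_zero 2 hs0)).isUnit
  · rw [Submodule.map_span, Set.image_pair, vecMulLinear_apply, vecMulLinear_apply,
      vecMul_extSq_sqrtMergingMatrix_e₃₄, vecMul_extSq_sqrtMergingMatrix_e₁₂, hs]
    exact Submodule.span_pair_smul_sub_smul_add h2 hs0 _ _
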